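/- arXiv:1309.3904 — 3 statements merged into one kernel-verified Lean document; each statement's English description precedes it below -/
import Mathlib

section
/- Let V be a finite-dimensional vector space over a field F, let E ⊆ V be a subspace, and let P = {g ∈ GL(V) : g(E) = E} be its stabilizer. Then two k-dimensional subspaces L, L′ ⊆ V lie in the same P-orbit if and only if dim(L ∩ E) = dim(L′ ∩ E). -/
/-!
Pairs of subspaces `(L, E)` are classified up to `GL(V)` by `dim L`, `dim E` and `dim (L ∩ E)`.
Writing `L = A ⊕ C` and `E = A ⊕ D` with `A = L ∩ E`, the subspaces `A`, `C`, `D` are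
independent, so an equivalence can be prescribed on each of them separately. This is done two
pieces at a time: linear equivalences matching two disjoint pieces are glued along the internal
direct sum formed by the pieces and a complement of their sum.
-/

open Module

theorem Submodule.map_eq_of_eqOn {R M M' : Type*} [Semiring R] [AddCommMonoid M] [Module R M]
    [AddCommMonoid M'] [Module R M'] {f g : M →ₗ[R] M'} {p : Submodule R M}
    (h : Set.EqOn f g p) : p.map f = p.map g :=
  SetLike.coe_injective <| by simpa using h.image_eq

theorem Disjoint.of_disjoint_inf_left_of_le {α : Type*} [SemilatticeInf α] [OrderBot α]
    {a b c : α} (h : Disjoint (a ⊓ b) c) (hc : c ≤ b) : Disjoint a c := by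
  rw [disjoint_iff, ← inf_eq_right.2 hc, ← inf_assoc]
  exact h.eq_bot

namespace DirectSum

theorem IsInternal.exists_linearEquiv_eqOn {ι R M M' : Type*} [DecidableEq ι]
    [Semiring R] [AddCommMonoid M] [Module R M] [AddCommMonoid M'] [Module R M']
    {A : ι → Submodule R M} {A' : ι → Submodule R M'}
    (hA : IsInternal A) (hA' : IsInternal A')
    (g : ι → M ≃ₗ[R] M') (hg : ∀ i, (A i).map (g i : M →ₗ[R] M') = A' i) :
    ∃ f : M ≃ₗ[R] M', ∀ i, Set.EqOn f (g i) (A i) := by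
  let e i : A i ≃ₗ[R] A' i := (g i).submoduleMap (A i) ≪≫ₗ LinearEquiv.ofEq _ _ (hg i)
  refine ⟨(LinearEquiv.ofBijective (coeLinearMap A) hA).symm ≪≫ₗ
    DFinsupp.mapRange.linearEquiv e ≪≫ₗ LinearEquiv.ofBijective (coeLinearMap A') hA',
    fun i x hx => ?_⟩
  have hx_of :
      (LinearEquiv.ofBijective (coeLinearMap A) hA).symm x = of (fun i => A i) i ⟨x, hx⟩ :=
    (LinearEquiv.symm_apply_eq _).2 (coeLinearMap_of A i ⟨x, hx⟩).symm
  rw [LinearEquiv.trans_apply, LinearEquiv.trans_apply, hx_of]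
  show coeLinearMap A' (DFinsupp.mapRange.linearEquiv e (DFinsupp.single i ⟨x, hx⟩)) = g i x
  rw [DFinsupp.mapRange.linearEquiv_apply, DFinsupp.mapRange_single]
  exact coeLinearMap_of A' i _

theorem isInternal_of_disjoint_of_isCompl_sup {R M : Type*} [Ring R] [AddCommGroup M]
    [Module R M] {p q r : Submodule R M} (hpq : Disjoint p q) (h : IsCompl (p ⊔ q) r) :
    IsInternal ![p, q, r] := by
  rw [isInternal_submodule_iff_iSupIndep_and_iSup_eq_top, iSupIndep_fin_three, iSup_fin_three]
  refine ⟨⟨hpq.disjoint_sup_right_of_disjoint_sup_left h.disjoint, ?_, h.disjoint.symm⟩,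
    h.codisjoint.eq_top⟩
  rw [sup_comm]
  exact hpq.symm.disjoint_sup_right_of_disjoint_sup_left (sup_comm p q ▸ h.disjoint)

end DirectSum

section

variable {K V V' : Type*} [DivisionRing K] [AddCommGroup V] [Module K V] [AddCommGroup V']
  [Module K V'] [FiniteDimensional K V] [FiniteDimensional K V']

theorem Submodule.finrank_sup_of_disjoint {p q : Submodule K V} (h : Disjoint p q) :
    finrank K ↥(p ⊔ q) = finrank K p + finrank K q := by
  rw [← Submodule.finrank_sup_add_finrank_inf_eq, h.eq_bot, finrank_bot, add_zero]

theorem Submodule.exists_disjoint_sup_eq_finrank_add {p q : Submodule K V} (h : p ≤ q) :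
    ∃ r : Submodule K V, Disjoint p r ∧ p ⊔ r = q ∧
      finrank K p + finrank K r = finrank K q := by
  obtain ⟨r, hr, hpr⟩ := IsModularLattice.exists_disjoint_and_sup_eq h
  exact ⟨r, hr, hpr, hpr ▸ (Submodule.finrank_sup_of_disjoint hr).symm⟩

theorem Submodule.exists_linearEquiv_map_eq (hV : finrank K V = finrank K V')
    {p : Submodule K V} {p' : Submodule K V'} (hp : finrank K p = finrank K p') :
    ∃ g : V ≃ₗ[K] V', p.map (g : V →ₗ[K] V') = p' := by
  obtain ⟨q, hq⟩ := p.exists_isCompl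
  obtain ⟨q', hq'⟩ := p'.exists_isCompl
  have hq_finrank : finrank K q = finrank K q' := by
    have := Submodule.finrank_add_eq_of_isCompl hq
    have := Submodule.finrank_add_eq_of_isCompl hq'
    omega
  let g := (p.prodEquivOfIsCompl q hq).symm ≪≫ₗ
    (LinearEquiv.ofFinrankEq p p' hp).prodCongr (LinearEquiv.ofFinrankEq q q' hq_finrank) ≪≫ₗ
    p'.prodEquivOfIsCompl q' hq'
  refine ⟨g, Submodule.eq_of_le_of_finrank_eq ?_ (by rw [LinearEquiv.finrank_map_eq, hp])⟩
  rintro _ ⟨x, hx, rfl⟩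
  simp [g, Submodule.prodEquivOfIsCompl_symm_apply_left p q hq ⟨x, hx⟩]

theorem exists_linearEquiv_eqOn_of_disjoint (hV : finrank K V = finrank K V')
    {p q : Submodule K V} {p' q' : Submodule K V'} (h : Disjoint p q) (h' : Disjoint p' q')
    (g₁ g₂ : V ≃ₗ[K] V') (h₁ : p.map (g₁ : V →ₗ[K] V') = p')
    (h₂ : q.map (g₂ : V →ₗ[K] V') = q') :
    ∃ g : V ≃ₗ[K] V', Set.EqOn g g₁ p ∧ Set.EqOn g g₂ q := by
  obtain ⟨r, hr⟩ := (p ⊔ q).exists_isCompl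
  obtain ⟨r', hr'⟩ := (p' ⊔ q').exists_isCompl
  have hr_finrank : finrank K r = finrank K r' := by
    have hp : finrank K p = finrank K p' := by rw [← h₁, LinearEquiv.finrank_map_eq]
    have hq : finrank K q = finrank K q' := by rw [← h₂, LinearEquiv.finrank_map_eq]
    have hsum := Submodule.finrank_add_eq_of_isCompl hr
    have hsum' := Submodule.finrank_add_eq_of_isCompl hr'
    rw [Submodule.finrank_sup_of_disjoint h] at hsum
    rw [Submodule.finrank_sup_of_disjoint h'] at hsum'
    omega
  obtain ⟨g₃, h₃⟩ := Submodule.exists_linearEquiv_map_eq hV hr_finrank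
  obtain ⟨g, hg⟩ :=
    (DirectSum.isInternal_of_disjoint_of_isCompl_sup h hr).exists_linearEquiv_eqOn
      (DirectSum.isInternal_of_disjoint_of_isCompl_sup h' hr') ![g₁, g₂, g₃]
      (fun i => by fin_cases i <;> assumption)
  exact ⟨g, hg 0, hg 1⟩

theorem exists_linearEquiv_map_eq_map_eq (hV : finrank K V = finrank K V')
    {L E : Submodule K V} {L' E' : Submodule K V'}
    (hLE : finrank K ↥(L ⊓ E) = finrank K ↥(L' ⊓ E'))
    (hL : finrank K L = finrank K L') (hE : finrank K E = finrank K E') :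
    ∃ g : V ≃ₗ[K] V', L.map (g : V →ₗ[K] V') = L' ∧ E.map (g : V →ₗ[K] V') = E' := by
  obtain ⟨C, hC, hCL, hC_dim⟩ :=
    Submodule.exists_disjoint_sup_eq_finrank_add (@inf_le_left _ _ L E)
  obtain ⟨C', hC', hCL', hC'_dim⟩ :=
    Submodule.exists_disjoint_sup_eq_finrank_add (@inf_le_left _ _ L' E')
  obtain ⟨D, hD, hDE, hD_dim⟩ :=
    Submodule.exists_disjoint_sup_eq_finrank_add (@inf_le_right _ _ L E)
  obtain ⟨D', hD', hDE', hD'_dim⟩ :=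
    Submodule.exists_disjoint_sup_eq_finrank_add (@inf_le_right _ _ L' E')
  obtain ⟨gA, hgA⟩ := Submodule.exists_linearEquiv_map_eq hV hLE
  obtain ⟨gC, hgC⟩ :=
    Submodule.exists_linearEquiv_map_eq (p := C) (p' := C') hV (by omega)
  obtain ⟨gD, hgD⟩ :=
    Submodule.exists_linearEquiv_map_eq (p := D) (p' := D') hV (by omega)
  obtain ⟨g₁, hg₁A, hg₁C⟩ := exists_linearEquiv_eqOn_of_disjoint hV hC hC' gA gC hgA hgC
  have hg₁L : L.map (g₁ : V →ₗ[K] V') = L' := by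
    rw [← hCL, ← hCL', Submodule.map_sup, Submodule.map_eq_of_eqOn hg₁A,
      Submodule.map_eq_of_eqOn hg₁C, hgA, hgC]
  obtain ⟨g, hgL, hgD'⟩ := exists_linearEquiv_eqOn_of_disjoint hV
    (hD.of_disjoint_inf_left_of_le (hDE ▸ le_sup_right))
    (hD'.of_disjoint_inf_left_of_le (hDE' ▸ le_sup_right)) g₁ gD hg₁L hgD
  refine ⟨g, by rw [Submodule.map_eq_of_eqOn hgL, hg₁L], ?_⟩
  rw [← hDE, ← hDE', Submodule.map_sup, Submodule.map_eq_of_eqOn (hgL.mono inf_le_left),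
    Submodule.map_eq_of_eqOn hg₁A, hgA, Submodule.map_eq_of_eqOn hgD', hgD]

end

/-- Let `V` be a finite-dimensional vector space over `F`, `E ⊆ V` a subspace and
`P = {g ∈ GL(V) : g E = E}` its stabilizer. Two `k`-dimensional subspaces `L, L'` lie in
the same `P`-orbit iff `dim (L ∩ E) = dim (L' ∩ E)`. -/
theorem stmt7 (F : Type*) [Field F] (V : Type*) [AddCommGroup V] [Module F V]
    [FiniteDimensional F V] (E L L' : Submodule F V) (k : ℕ)
    (hL : Module.finrank F L = k) (hL' : Module.finrank F L' = k) :
    (∃ g : V ≃ₗ[F] V, Submodule.map (g : V →ₗ[F] V) E = E ∧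
        Submodule.map (g : V →ₗ[F] V) L = L') ↔
      Module.finrank F ↥(L ⊓ E) = Module.finrank F ↥(L' ⊓ E) := by
  constructor
  · rintro ⟨g, hgE, hgL⟩
    rw [← hgL, ← LinearEquiv.finrank_map_eq g, Submodule.map_inf _ g.injective, hgE]
  · intro hLE
    obtain ⟨g, hgL, hgE⟩ := exists_linearEquiv_map_eq_map_eq rfl hLE (hL.trans hL'.symm) rfl
    exact ⟨g, hgE, hgL⟩
end

section
/- Let V = V₁ ⊕ V₂ be a direct sum of vector spaces. For subspaces L′, L̃′ ⊆ V₁, L″, L̃″ ⊆ V₂ and linear maps b, b̃ : V₂ → V₁, define [L′, L″, b] = { (x + b(y), y) : x ∈ L′, y ∈ L″ } ⊆ V₁ ⊕ V₂. Then [L′, L″, b] = [L̃′, L̃″, b̃] if and only if L′ = L̃′, L″ = L̃″, and (b − b̃)(L″) ⊆ L′. -/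
/-- The subset `[L', L'', b] = {(x + b y, y) : x ∈ L', y ∈ L''}` of `V₁ × V₂`. -/
def bruhatCell {F V₁ V₂ : Type*} [Field F] [AddCommGroup V₁] [Module F V₁]
    [AddCommGroup V₂] [Module F V₂] (L' : Submodule F V₁) (L'' : Submodule F V₂)
    (b : V₂ →ₗ[F] V₁) : Set (V₁ × V₂) :=
  {p | ∃ x ∈ L', ∃ y ∈ L'', p = (x + b y, y)}

/-- `[L', L'', b] = [M', M'', b̃]` iff `L' = M'`, `L'' = M''` and `(b − b̃)(L'') ⊆ L'`. -/
theorem stmt8 (F V₁ V₂ : Type*) [Field F] [AddCommGroup V₁] [Module F V₁]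
    [AddCommGroup V₂] [Module F V₂]
    (L' M' : Submodule F V₁) (L'' M'' : Submodule F V₂) (b c : V₂ →ₗ[F] V₁) :
    bruhatCell L' L'' b = bruhatCell M' M'' c ↔
      (L' = M' ∧ L'' = M'' ∧ Submodule.map (b - c) L'' ≤ L') := by
  constructor
  · intro h
    have hmem : ∀ x ∈ L', ∀ y ∈ L'', (x + b y, y) ∈ bruhatCell M' M'' c := by
      intro x hx y hy
      rw [← h]; exact ⟨x, hx, y, hy, rfl⟩
    have hmem' : ∀ x ∈ M', ∀ y ∈ M'', (x + c y, y) ∈ bruhatCell L' L'' b := by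
      intro x hx y hy
      rw [h]; exact ⟨x, hx, y, hy, rfl⟩
    have hL' : L' = M' := by
      ext x
      constructor
      · intro hx
        obtain ⟨x', hx', y', hy', heq⟩ := hmem x hx 0 L''.zero_mem
        have h2 : y' = 0 := (Prod.mk.injEq .. ▸ heq).2.symm
        have h1 := (Prod.mk.injEq .. ▸ heq).1
        simp [h2, map_zero] at h1
        exact h1 ▸ hx'
      · intro hx
        obtain ⟨x', hx', y', hy', heq⟩ := hmem' x hx 0 M''.zero_mem
        have h2 : y' = 0 := (Prod.mk.injEq .. ▸ heq).2.symm
        have h1 := (Prod.mk.injEq .. ▸ heq).1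
        simp [h2, map_zero] at h1
        exact h1 ▸ hx'
    have hL'' : L'' = M'' := by
      ext y
      constructor
      · intro hy
        obtain ⟨x', hx', y', hy', heq⟩ := hmem 0 L'.zero_mem y hy
        have h2 : y = y' := (Prod.mk.injEq .. ▸ heq).2
        exact h2 ▸ hy'
      · intro hy
        obtain ⟨x', hx', y', hy', heq⟩ := hmem' 0 M'.zero_mem y hy
        have h2 : y = y' := (Prod.mk.injEq .. ▸ heq).2
        exact h2 ▸ hy'
    refine ⟨hL', hL'', ?_⟩
    rintro v ⟨y, hy, rfl⟩
    obtain ⟨x', hx', y', hy', heq⟩ := hmem 0 L'.zero_mem y hy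
    have h2 : y = y' := (Prod.mk.injEq .. ▸ heq).2
    have h1 := (Prod.mk.injEq .. ▸ heq).1
    subst h2
    rw [zero_add] at h1
    have : (b - c) y = x' := by simp [LinearMap.sub_apply, h1]
    rw [this, hL']
    exact hx'
  · rintro ⟨rfl, rfl, hbc⟩
    ext ⟨u, v⟩
    constructor
    · rintro ⟨x, hx, y, hy, heq⟩
      refine ⟨x + (b - c) y, L'.add_mem hx (hbc ⟨y, hy, rfl⟩), y, hy, ?_⟩
      simp only [Prod.mk.injEq] at heq ⊢
      refine ⟨?_, heq.2⟩
      rw [heq.1, LinearMap.sub_apply]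
      abel
    · rintro ⟨x, hx, y, hy, heq⟩
      refine ⟨x - (b - c) y, L'.sub_mem hx (hbc ⟨y, hy, rfl⟩), y, hy, ?_⟩
      simp only [Prod.mk.injEq] at heq ⊢
      refine ⟨?_, heq.2⟩
      rw [heq.1, LinearMap.sub_apply]
      abel
end

section
/- View ℂⁿ as a real vector space ℝ²ⁿ with complex structure J (multiplication by i). For a real subspace L ⊆ ℂⁿ, the intersection L ∩ J(L) is a complex subspace of ℂⁿ. Two real subspaces L, L′ ⊆ ℂⁿ of the same real dimension k lie in the same orbit of GL(n, ℂ) (acting ℂ-linearly, hence ℝ-linearly) if and only if dim_ℂ(L ∩ J(L)) = dim_ℂ(L′ ∩ J(L′)). -/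
/-!
`L ∩ JL` is the largest complex subspace `W` of `L`. If `U` is a real complement of `W` in `L`,
then `a + i b ∈ W` with `a, b ∈ U` forces `a = b = 0`, so a complex basis of `W` together with a
real basis of `U` is complex-linearly independent, and `L` is its complex span on the first block
plus its real span on the second. The shape of such a family is `(dim_ℂ W, dim_ℝ L - 2 dim_ℂ W)`,
and any two independent families of the same shape are related by a complex automorphism.
-/

/-- Multiplication by `i` on `ℂⁿ`, viewed as a real-linear map. -/
noncomputable def Jmap (n : ℕ) : (Fin n → ℂ) →ₗ[ℝ] (Fin n → ℂ) :=
  Complex.I • (LinearMap.id : (Fin n → ℂ) →ₗ[ℝ] (Fin n → ℂ))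

open Module Submodule Set

theorem Module.Basis.sumExtend_apply_inl {K V ι : Type*} [DivisionRing K] [AddCommGroup V]
    [Module K V] {v : ι → V} (hv : LinearIndependent K v) (i : ι) :
    Basis.sumExtend hv (Sum.inl i) = v i := by
  rw [Basis.sumExtend, Basis.reindex_apply, Basis.extend_apply_self]
  rfl

theorem LinearIndependent.exists_linearEquiv_apply_eq {K V ι : Type*} [DivisionRing K]
    [AddCommGroup V] [Module K V] [FiniteDimensional K V] {v v' : ι → V}
    (hv : LinearIndependent K v) (hv' : LinearIndependent K v') :
    ∃ g : V ≃ₗ[K] V, ∀ i, g (v i) = v' i := by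
  let b := Basis.sumExtend hv
  let b' := Basis.sumExtend hv'
  have := Module.Finite.finite_basis b
  have := Module.Finite.finite_basis b'
  have := Finite.sum_left (α := ι) (Basis.sumExtendIndex hv)
  have := Finite.sum_right ι (β := Basis.sumExtendIndex hv)
  have := Finite.sum_right ι (β := Basis.sumExtendIndex hv')
  have hcard : Nat.card (Basis.sumExtendIndex hv) = Nat.card (Basis.sumExtendIndex hv') := by
    have h := (finrank_eq_nat_card_basis b).symm.trans (finrank_eq_nat_card_basis b')
    rw [Nat.card_sum, Nat.card_sum] at h
    omega
  obtain ⟨σ⟩ := Finite.card_eq.1 hcard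
  let τ := (Equiv.refl ι).sumCongr σ
  refine ⟨b.equiv b' τ, fun i => ?_⟩
  simpa [b, b', τ, Basis.sumExtend_apply_inl] using b.equiv_apply (Sum.inl i) b' τ

section ComplexStructure

variable {V V' : Type*} [AddCommGroup V] [Module ℂ V] [Module ℝ V] [IsScalarTower ℝ ℂ V]
  [AddCommGroup V'] [Module ℂ V'] [Module ℝ V'] [IsScalarTower ℝ ℂ V']

theorem complex_smul_eq_re_smul_add_im_smul_I_smul (c : ℂ) (x : V) :
    c • x = c.re • x + c.im • (Complex.I • x) := by
  conv_lhs => rw [← Complex.re_add_im c]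
  rw [add_smul, mul_smul, ← algebraMap_smul ℂ c.re x, ← algebraMap_smul ℂ c.im]
  rfl

theorem sum_smul_eq_sum_re_smul_add_I_smul_sum_im_smul {ι : Type*} (s : Finset ι) (c : ι → ℂ)
    (u : ι → V) :
    ∑ j ∈ s, c j • u j = ∑ j ∈ s, (c j).re • u j + Complex.I • ∑ j ∈ s, (c j).im • u j := by
  simp only [complex_smul_eq_re_smul_add_im_smul_I_smul (c _), Finset.sum_add_distrib,
    Finset.smul_sum, smul_comm Complex.I]

def complexPart (L : Submodule ℝ V) : Submodule ℂ V where
  carrier := {x | x ∈ L ∧ Complex.I • x ∈ L}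
  zero_mem' := by simp
  add_mem' hx hy := ⟨L.add_mem hx.1 hy.1, by rw [smul_add]; exact L.add_mem hx.2 hy.2⟩
  smul_mem' c x := by
    rintro ⟨hx, hIx⟩
    have hIIx : Complex.I • Complex.I • x ∈ L := by
      rw [smul_smul, Complex.I_mul_I, neg_one_smul]
      exact L.neg_mem hx
    show _ ∧ _
    simp only [complex_smul_eq_re_smul_add_im_smul_I_smul c x, smul_add,
      smul_comm Complex.I (_ : ℝ)]
    exact ⟨L.add_mem (L.smul_mem _ hx) (L.smul_mem _ hIx),
      L.add_mem (L.smul_mem _ hIx) (L.smul_mem _ hIIx)⟩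

theorem mem_complexPart {L : Submodule ℝ V} {x : V} :
    x ∈ complexPart L ↔ x ∈ L ∧ Complex.I • x ∈ L :=
  Iff.rfl

theorem restrictScalars_complexPart (L : Submodule ℝ V) :
    (complexPart L).restrictScalars ℝ = L ⊓ L.map (Complex.I • LinearMap.id : V →ₗ[ℝ] V) := by
  ext x
  simp only [restrictScalars_mem, mem_complexPart, mem_inf, mem_map, LinearMap.smul_apply,
    LinearMap.id_apply]
  refine and_congr_right fun _ => ⟨fun h => ⟨-(Complex.I • x), L.neg_mem h, ?_⟩, ?_⟩
  · rw [smul_neg, smul_smul, Complex.I_mul_I, neg_one_smul, neg_neg]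
  · rintro ⟨y, hy, rfl⟩
    rw [smul_smul, Complex.I_mul_I, neg_one_smul]
    exact L.neg_mem hy

theorem finrank_restrictScalars_real (W : Submodule ℂ V) :
    finrank ℝ (W.restrictScalars ℝ) = 2 * finrank ℂ W := by
  rw [← Complex.finrank_real_complex, finrank_mul_finrank]
  exact ((restrictScalarsEquiv ℝ ℂ V W).restrictScalars ℝ).finrank_eq

theorem complexPart_map (L : Submodule ℝ V) (g : V ≃ₗ[ℂ] V') :
    complexPart (L.map ((g : V →ₗ[ℂ] V').restrictScalars ℝ)) =
      (complexPart L).map (g : V →ₗ[ℂ] V') := by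
  have hg : (g : V →ₗ[ℂ] V').restrictScalars ℝ = (g.restrictScalars ℝ : V ≃ₗ[ℝ] V') := rfl
  ext x
  rw [hg]
  simp only [mem_complexPart, mem_map_equiv]
  exact and_congr_right' (by rw [← map_smul]; rfl)

theorem eq_zero_of_add_I_smul_mem_complexPart {L U : Submodule ℝ V} (hUL : U ≤ L)
    (hU : Disjoint ((complexPart L).restrictScalars ℝ) U) {a b : V} (ha : a ∈ U) (hb : b ∈ U)
    (hab : a + Complex.I • b ∈ complexPart L) : a = 0 ∧ b = 0 := by
  have hIb : Complex.I • b ∈ L := by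
    simpa using L.sub_mem (mem_complexPart.1 hab).1 (hUL ha)
  have hb0 : b = 0 := (disjoint_def.1 hU) b ⟨hUL hb, hIb⟩ hb
  subst hb0
  exact ⟨(disjoint_def.1 hU) a (by simpa using hab) ha, rfl⟩

theorem linearIndependent_sumElim_of_forall_add_I_smul_mem {ι κ : Type*} [Fintype ι] [Fintype κ]
    {W : Submodule ℂ V} {U : Submodule ℝ V}
    (hWU : ∀ a ∈ U, ∀ b ∈ U, a + Complex.I • b ∈ W → a = 0 ∧ b = 0)
    {e : ι → V} {u : κ → V} (he : LinearIndependent ℂ e) (heW : ∀ i, e i ∈ W)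
    (hu : LinearIndependent ℝ u) (huU : ∀ j, u j ∈ U) :
    LinearIndependent ℂ (Sum.elim e u) := by
  rw [Fintype.linearIndependent_iff]
  intro c hc
  simp only [Fintype.sum_sum_type, Sum.elim_inl, Sum.elim_inr] at hc
  have hW : ∑ j, (c (.inr j)).re • u j + Complex.I • ∑ j, (c (.inr j)).im • u j ∈ W := by
    rw [← sum_smul_eq_sum_re_smul_add_I_smul_sum_im_smul, eq_neg_of_add_eq_zero_right hc]
    exact W.neg_mem (W.sum_mem fun i _ => W.smul_mem _ (heW i))
  obtain ⟨hre, him⟩ := hWU _ (U.sum_mem fun j _ => U.smul_mem _ (huU j))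
    _ (U.sum_mem fun j _ => U.smul_mem _ (huU j)) hW
  have hcr : ∀ j, c (.inr j) = 0 := fun j =>
    Complex.ext (Fintype.linearIndependent_iff.1 hu _ hre j)
      (Fintype.linearIndependent_iff.1 hu _ him j)
  simp only [hcr, zero_smul, Finset.sum_const_zero, add_zero] at hc
  rintro (i | j)
  exacts [Fintype.linearIndependent_iff.1 he _ hc i, hcr j]

noncomputable def mixedSpan {ι κ : Type*} (f : ι ⊕ κ → V) : Submodule ℝ V :=
  (span ℂ (range (f ∘ Sum.inl))).restrictScalars ℝ ⊔ span ℝ (range (f ∘ Sum.inr))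

theorem map_mixedSpan {ι κ : Type*} (g : V →ₗ[ℂ] V') (f : ι ⊕ κ → V) :
    (mixedSpan f).map (g.restrictScalars ℝ) = mixedSpan (g ∘ f) := by
  rw [mixedSpan, mixedSpan, Submodule.map_sup, ← restrictScalars_map, map_span, map_span,
    ← range_comp, ← range_comp]
  rfl

theorem exists_linearIndependent_mixedSpan_eq [FiniteDimensional ℂ V] (L : Submodule ℝ V) :
    ∃ (m r : ℕ) (f : Fin m ⊕ Fin r → V), LinearIndependent ℂ f ∧ mixedSpan f = L ∧
      finrank ℂ (complexPart L) = m ∧ finrank ℝ L = 2 * m + r := by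
  have := Module.Finite.trans (R := ℝ) ℂ V
  set W := complexPart L
  have hWL : W.restrictScalars ℝ ≤ L := fun _ hx => hx.1
  obtain ⟨U, hWU, hsup⟩ := IsModularLattice.exists_disjoint_and_sup_eq hWL
  have hUL : U ≤ L := hsup ▸ le_sup_right
  let bW := finBasis ℂ W
  let bU := finBasis ℝ U
  refine ⟨_, _, Sum.elim (W.subtype ∘ bW) (U.subtype ∘ bU), ?_, ?_, rfl, ?_⟩
  · exact linearIndependent_sumElim_of_forall_add_I_smul_mem
      (fun a ha b hb => eq_zero_of_add_I_smul_mem_complexPart hUL hWU ha hb)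
      (bW.linearIndependent.map' _ W.ker_subtype) (fun i => (bW i).2)
      (bU.linearIndependent.map' _ U.ker_subtype) (fun j => (bU j).2)
  · rw [mixedSpan, Sum.elim_comp_inl, Sum.elim_comp_inr, range_comp, range_comp, ← map_span,
      ← map_span, bW.span_eq, bU.span_eq, map_subtype_top, map_subtype_top, hsup]
  · rw [← hsup, ← finrank_restrictScalars_real, ← finrank_sup_add_finrank_inf_eq, hWU.eq_bot,
      finrank_bot, add_zero]

end ComplexStructure

/-- For a real subspace `L ⊆ ℂⁿ`, the intersection `L ∩ J(L)` is a complex subspace; and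
two real subspaces of the same real dimension `k` lie in the same `GL(n,ℂ)`-orbit iff
`dim_ℂ (L ∩ JL) = dim_ℂ (L' ∩ JL')` (equivalently, the real dimensions agree). -/
theorem stmt17 (n k : ℕ) :
    (∀ L : Submodule ℝ (Fin n → ℂ), ∃ W : Submodule ℂ (Fin n → ℂ),
        (W : Set (Fin n → ℂ)) = ↑(L ⊓ L.map (Jmap n))) ∧
    (∀ L L' : Submodule ℝ (Fin n → ℂ),
      Module.finrank ℝ L = k → Module.finrank ℝ L' = k →
      ((∃ g : (Fin n → ℂ) ≃ₗ[ℂ] (Fin n → ℂ),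
          Submodule.map ((g : (Fin n → ℂ) →ₗ[ℂ] (Fin n → ℂ)).restrictScalars ℝ) L = L') ↔
        Module.finrank ℝ ↥(L ⊓ L.map (Jmap n)) =
          Module.finrank ℝ ↥(L' ⊓ L'.map (Jmap n)))) := by
  have hJ (L : Submodule ℝ (Fin n → ℂ)) :
      L ⊓ L.map (Jmap n) = (complexPart L).restrictScalars ℝ :=
    (restrictScalars_complexPart L).symm
  refine ⟨fun L => ⟨complexPart L, by rw [hJ]; rfl⟩, fun L L' hL hL' => ?_⟩
  rw [hJ, hJ, finrank_restrictScalars_real, finrank_restrictScalars_real]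
  refine ⟨?_, fun h => ?_⟩
  · rintro ⟨g, rfl⟩
    rw [complexPart_map, LinearEquiv.finrank_map_eq]
  · obtain ⟨m, r, f, hf, rfl, hm, hr⟩ := exists_linearIndependent_mixedSpan_eq L
    obtain ⟨m', r', f', hf', rfl, hm', hr'⟩ := exists_linearIndependent_mixedSpan_eq L'
    obtain rfl : m' = m := by omega
    obtain rfl : r' = r := by omega
    obtain ⟨g, hg⟩ := hf.exists_linearEquiv_apply_eq hf'
    exact ⟨g, by rw [map_mixedSpan]; exact congrArg mixedSpan (funext hg)⟩
end
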